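/- Lemma (basic descent estimate for Perturbed GDA). Let f be ℓ-smooth and satisfy the standing assumptions, let r_y > 0, and run Perturbed GDA with step sizes 0 < α ≤ 1/(4(ℓ + r_y)) and 0 < c ≤ r_y/(ℓ(3r_y + 2ℓ)). Define Φ̃(x) := max_{y∈Y} f̃(x,y) for x ∈ X and Ψ_1(x,y) := 2Φ̃(x) − f̃(x,y). Assume (as is known for this setting) that Φ̃ is differentiable on X with ∇Φ̃(x) = ∇_x f(x, ỹ*(x)) and that ∇Φ̃ is (ℓ + ℓ²/r_y)-Lipschitz on X. Then for every t ≥ 0: Ψ_1(x_{t+1}, y_{t+1}) − Ψ_1(x_t, y_t) ≤ 2ℓ·‖ỹ*(x_t) − y_t‖·‖x_{t+1} − x_t‖ − (1/(2α))·‖y_{t+1} − y_t‖² − (1/(2c))·‖x_{t+1} − x_t‖². -/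

import Mathlib

/-! Write `Δx = x_{t+1} - x_t`, `Δy = y_{t+1} - y_t`. The change of `Ψ₁` splits into
`2 (Φ̃(x_{t+1}) - Φ̃(x_t))`, `-(f(x_{t+1}, y_t) - f(x_t, y_t))` and
`-(f̃(x_{t+1}, y_{t+1}) - f̃(x_{t+1}, y_t))`. The descent lemma bounds each by its linearisation
plus `(ℓ + ℓ²/r_y) ‖Δx‖²`, `ℓ/2 ‖Δx‖²` and `(ℓ + r_y)/2 ‖Δy‖²` respectively (the regulariser
`‖y‖²` is expanded exactly). The projection inequalities of the two steps turn the linear terms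
into `-‖Δx‖²/c` and `-‖Δy‖²/α`, except for the gap `2 ⟪∇Φ̃(x_t) - ∇ₓf(x_t, y_t), Δx⟫`, which is at
most `2ℓ ‖ỹ*(x_t) - y_t‖ ‖Δx‖`. The step-size conditions make the quadratic remainders at most
`‖Δx‖²/(2c)` and `‖Δy‖²/(2α)`. -/

open Set

noncomputable section

/-- Euclidean space `ℝ^m`. -/
abbrev Euc (m : ℕ) : Type := EuclideanSpace ℝ (Fin m)

/-- `P` is the metric projection onto the set `S`, characterized by
`⟨u − P u, s − P u⟩ ≤ 0` for all `s ∈ S`. -/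
def IsProjection {m : ℕ} (S : Set (Euc m)) (P : Euc m → Euc m) : Prop :=
  ∀ u, P u ∈ S ∧ ∀ s ∈ S, (inner ℝ (u - P u) (s - P u) : ℝ) ≤ 0

/-- `f` is `l`-smooth, witnessed by the partial gradient maps `gx`, `gy`. -/
def LSmooth {n d : ℕ} (f : Euc n → Euc d → ℝ) (gx : Euc n → Euc d → Euc n)
    (gy : Euc n → Euc d → Euc d) (l : ℝ) : Prop :=
  (∀ x y, HasGradientAt (fun x' => f x' y) (gx x y) x) ∧
  (∀ x y, HasGradientAt (fun y' => f x y') (gy x y) y) ∧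
  (∀ x x' y y', ‖gx x y - gx x' y'‖ ≤ l * (‖x - x'‖ + ‖y - y'‖)) ∧
  (∀ x x' y y', ‖gy x y - gy x' y'‖ ≤ l * (‖x - x'‖ + ‖y - y'‖))

/-- Standing assumptions: `X` closed convex; `Y` nonempty compact convex
containing `0` with diameter `Dy`; `f x` concave on `Y` for every `x ∈ X`. -/
def Standing {n d : ℕ} (f : Euc n → Euc d → ℝ) (X : Set (Euc n)) (Y : Set (Euc d))
    (Dy : ℝ) : Prop :=
  IsClosed X ∧ Convex ℝ X ∧ Y.Nonempty ∧ IsCompact Y ∧ Convex ℝ Y ∧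
    (0 : Euc d) ∈ Y ∧ Metric.diam Y = Dy ∧ ∀ x ∈ X, ConcaveOn ℝ Y (f x)

open scoped RealInnerProductSpace

section DescentLemma

variable {E : Type*} [NormedAddCommGroup E] [InnerProductSpace ℝ E] [CompleteSpace E]

theorem HasGradientAt.hasDerivAt_comp_add_smul {φ : E → ℝ} {g a v : E} {s : ℝ}
    (h : HasGradientAt φ g (a + s • v)) :
    HasDerivAt (fun s : ℝ => φ (a + s • v)) ⟪g, v⟫ s := by
  have hline : HasDerivAt (fun s : ℝ => a + s • v) v s := by
    simpa using ((hasDerivAt_id s).smul_const v).const_add a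
  have := h.hasFDerivAt.comp_hasDerivAt s hline
  simp only [InnerProductSpace.toDual_apply_apply] at this
  exact this

theorem Convex.abs_sub_sub_inner_le {S : Set E} (hS : Convex ℝ S) {φ : E → ℝ} {g : E → E}
    {K : ℝ} (hφ : ∀ z ∈ S, HasGradientAt φ (g z) z)
    (hg : ∀ z ∈ S, ∀ z' ∈ S, ‖g z - g z'‖ ≤ K * ‖z - z'‖) {a b : E} (ha : a ∈ S) (hb : b ∈ S) :
    |φ b - φ a - ⟪g a, b - a⟫| ≤ K / 2 * ‖b - a‖ ^ 2 := by
  set v := b - a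
  have hseg : ∀ s ∈ Icc (0 : ℝ) 1, a + s • v ∈ S := fun s hs => hS.add_smul_sub_mem ha hb hs
  have hderiv : ∀ s ∈ Icc (0 : ℝ) 1,
      HasDerivAt (fun s : ℝ => φ (a + s • v) - φ a - s * ⟪g a, v⟫) ⟪g (a + s • v) - g a, v⟫ s := by
    intro s hs
    rw [inner_sub_left]
    exact (((hφ _ (hseg s hs)).hasDerivAt_comp_add_smul).sub_const (φ a)).sub
      (hasDerivAt_mul_const _)
  have hbound : ∀ s ∈ Ico (0 : ℝ) 1, ‖⟪g (a + s • v) - g a, v⟫‖ ≤ K * s * ‖v‖ ^ 2 := by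
    intro s hs
    calc ‖⟪g (a + s • v) - g a, v⟫‖ ≤ ‖g (a + s • v) - g a‖ * ‖v‖ := norm_inner_le_norm _ _
      _ ≤ K * ‖a + s • v - a‖ * ‖v‖ := by
          gcongr; exact hg _ (hseg s (Ico_subset_Icc_self hs)) a ha
      _ = K * s * ‖v‖ ^ 2 := by
          rw [add_sub_cancel_left, norm_smul, Real.norm_of_nonneg hs.1]; ring
  have hB : ∀ s : ℝ, HasDerivAt (fun s => K / 2 * s ^ 2 * ‖v‖ ^ 2) (K * s * ‖v‖ ^ 2) s := by
    intro s
    have := ((hasDerivAt_pow 2 s).const_mul (K / 2)).mul_const (‖v‖ ^ 2)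
    exact this.congr_deriv (by push_cast; ring)
  have := image_norm_le_of_norm_deriv_right_le_deriv_boundary
    (fun s hs => (hderiv s hs).continuousAt.continuousWithinAt)
    (fun s hs => (hderiv s (Ico_subset_Icc_self hs)).hasDerivWithinAt) (by simp) hB hbound
    (right_mem_Icc.2 zero_le_one)
  simpa [v] using this

end DescentLemma

theorem IsProjection.norm_sq_div_le_inner {m : ℕ} {S : Set (Euc m)} {P : Euc m → Euc m}
    (hP : IsProjection S P) {u : Euc m} (hu : u ∈ S) (v : Euc m) {c : ℝ} (hc : 0 < c) :
    ‖P (u + c • v) - u‖ ^ 2 / c ≤ ⟪v, P (u + c • v) - u⟫ := by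
  have h := (hP (u + c • v)).2 u hu
  have hw : u + c • v - P (u + c • v) = c • v - (P (u + c • v) - u) := by abel
  rw [hw, ← neg_sub (P (u + c • v)) u, inner_neg_right, inner_sub_left, real_inner_smul_left,
    real_inner_self_eq_norm_sq] at h
  rw [div_le_iff₀ hc]
  linarith

theorem IsProjection.seq_mem {m : ℕ} {S : Set (Euc m)} {P : Euc m → Euc m}
    (hP : IsProjection S P) {u w : ℕ → Euc m} (h0 : u 0 ∈ S) (hrec : ∀ t, u (t + 1) = P (w t)) :
    ∀ t, u t ∈ S
  | 0 => h0
  | t + 1 => hrec t ▸ (hP _).1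

namespace LSmooth

variable {n d : ℕ} {f : Euc n → Euc d → ℝ} {gx : Euc n → Euc d → Euc n}
  {gy : Euc n → Euc d → Euc d} {l : ℝ}

theorem norm_gx_sub_gx_le_left (h : LSmooth f gx gy l) (x x' : Euc n) (y : Euc d) :
    ‖gx x y - gx x' y‖ ≤ l * ‖x - x'‖ := by
  simpa using h.2.2.1 x x' y y

theorem norm_gy_sub_gy_le_right (h : LSmooth f gx gy l) (x : Euc n) (y y' : Euc d) :
    ‖gy x y - gy x y'‖ ≤ l * ‖y - y'‖ := by
  simpa using h.2.2.2 x x y y'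

theorem inner_gx_sub_gx_le (h : LSmooth f gx gy l) (x v : Euc n) (y y' : Euc d) :
    ⟪gx x y - gx x y', v⟫ ≤ l * ‖y - y'‖ * ‖v‖ :=
  calc ⟪gx x y - gx x y', v⟫ ≤ ‖gx x y - gx x y'‖ * ‖v‖ := real_inner_le_norm _ _
    _ ≤ l * ‖y - y'‖ * ‖v‖ := by gcongr; simpa using h.2.2.1 x x y y'

theorem abs_sub_sub_inner_le_left (h : LSmooth f gx gy l) (x x' : Euc n) (y : Euc d) :
    |f x' y - f x y - ⟪gx x y, x' - x⟫| ≤ l / 2 * ‖x' - x‖ ^ 2 :=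
  convex_univ.abs_sub_sub_inner_le (fun z _ => h.1 z y)
    (fun z _ z' _ => h.norm_gx_sub_gx_le_left z z' y) (mem_univ x) (mem_univ x')

theorem abs_sub_sub_inner_le_right (h : LSmooth f gx gy l) (x : Euc n) (y y' : Euc d) :
    |f x y' - f x y - ⟪gy x y, y' - y⟫| ≤ l / 2 * ‖y' - y‖ ^ 2 :=
  convex_univ.abs_sub_sub_inner_le (fun z _ => h.2.1 x z)
    (fun z _ z' _ => h.norm_gy_sub_gy_le_right x z z') (mem_univ y) (mem_univ y')

end LSmooth

theorem perturbed_gda_basic_descent_general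
    (n d : ℕ) (f : Euc n → Euc d → ℝ) (gx : Euc n → Euc d → Euc n)
    (gy : Euc n → Euc d → Euc d) (X : Set (Euc n)) (Y : Set (Euc d))
    (l Dy ry α c : ℝ)
    (projX : Euc n → Euc n) (projY : Euc d → Euc d)
    (xs : ℕ → Euc n) (ys : ℕ → Euc d)
    (ystar : Euc n → Euc d) (Phit : Euc n → ℝ)
    (hl : 0 < l) (hry : 0 < ry)
    (hsmooth : LSmooth f gx gy l) (hstand : Standing f X Y Dy)
    (hprojX : IsProjection X projX) (hprojY : IsProjection Y projY)
    (hα : 0 < α) (hα' : α ≤ 1 / (4 * (l + ry)))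
    (hc : 0 < c) (hc' : c ≤ ry / (l * (3 * ry + 2 * l)))
    -- Perturbed GDA iterations
    (hx0 : xs 0 ∈ X) (hy0 : ys 0 ∈ Y)
    (hxrec : ∀ t, xs (t + 1) = projX (xs t - c • gx (xs t) (ys t)))
    (hyrec : ∀ t, ys (t + 1) = projY (ys t + α • (gy (xs (t + 1)) (ys t) - ry • ys t)))
    -- Φ̃ is differentiable on X with ∇Φ̃(x) = ∇ₓ f̃(x, ỹ*(x)) = gx x (ỹ*(x))
    (hgrad : ∀ x ∈ X, HasGradientAt Phit (gx x (ystar x)) x)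
    -- ∇Φ̃ is (ℓ + ℓ²/r_y)-Lipschitz on X
    (hlip : ∀ x ∈ X, ∀ x' ∈ X,
      ‖gx x (ystar x) - gx x' (ystar x')‖ ≤ (l + l ^ 2 / ry) * ‖x - x'‖) :
    ∀ t : ℕ,
      (2 * Phit (xs (t + 1)) - (f (xs (t + 1)) (ys (t + 1)) - ry / 2 * ‖ys (t + 1)‖ ^ 2))
        - (2 * Phit (xs t) - (f (xs t) (ys t) - ry / 2 * ‖ys t‖ ^ 2))
      ≤ 2 * l * ‖ystar (xs t) - ys t‖ * ‖xs (t + 1) - xs t‖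
        - 1 / (2 * α) * ‖ys (t + 1) - ys t‖ ^ 2
        - 1 / (2 * c) * ‖xs (t + 1) - xs t‖ ^ 2 := by
  intro t
  have hx := hprojX.seq_mem hx0 hxrec
  have hy := hprojY.seq_mem hy0 hyrec
  have hΦ := (abs_le.1 (hstand.2.1.abs_sub_sub_inner_le hgrad hlip (hx t) (hx (t + 1)))).2
  have hfx := (abs_le.1 (hsmooth.abs_sub_sub_inner_le_left (xs t) (xs (t + 1)) (ys t))).1
  have hfy := (abs_le.1 (hsmooth.abs_sub_sub_inner_le_right (xs (t + 1)) (ys t) (ys (t + 1)))).1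
  have hsq := norm_add_sq_real (ys t) (ys (t + 1) - ys t)
  rw [add_sub_cancel] at hsq
  have hgap := hsmooth.inner_gx_sub_gx_le (xs t) (xs (t + 1) - xs t) (ystar (xs t)) (ys t)
  rw [inner_sub_left] at hgap
  have hpx := hprojX.norm_sq_div_le_inner (hx t) (-gx (xs t) (ys t)) hc
  rw [smul_neg, ← sub_eq_add_neg, ← hxrec, inner_neg_left] at hpx
  have hpy := hprojY.norm_sq_div_le_inner (hy t) (gy (xs (t + 1)) (ys t) - ry • ys t) hα
  rw [← hyrec, inner_sub_left, real_inner_smul_left] at hpy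
  have hcx : l + l ^ 2 / ry + l / 2 ≤ 1 / (2 * c) := by
    have := (le_div_iff₀ (by positivity)).1 hc'
    rw [le_div_iff₀ (by positivity)]
    calc (l + l ^ 2 / ry + l / 2) * (2 * c) = c * (l * (3 * ry + 2 * l)) / ry := by
          field_simp; ring
      _ ≤ 1 := by rwa [div_le_one hry]
  have hcy : (l + ry) / 2 ≤ 1 / (2 * α) := by
    have := (le_div_iff₀ (by positivity)).1 hα'
    rw [div_le_div_iff₀ (by norm_num) (by positivity)]
    nlinarith
  linear_combination 2 * hΦ + hfx + hfy + ry / 2 * hsq + 2 * hgap + hpx + hpy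
    + ‖xs (t + 1) - xs t‖ ^ 2 * hcx + ‖ys (t + 1) - ys t‖ ^ 2 * hcy

/-- Basic descent estimate for Perturbed GDA on the potential
`Ψ₁(x,y) = 2 Φ̃(x) − f̃(x,y)`. -/
theorem perturbed_gda_basic_descent
    (n d : ℕ) (f : Euc n → Euc d → ℝ) (gx : Euc n → Euc d → Euc n)
    (gy : Euc n → Euc d → Euc d) (X : Set (Euc n)) (Y : Set (Euc d))
    (l Dy ry α c : ℝ)
    (projX : Euc n → Euc n) (projY : Euc d → Euc d)
    (xs : ℕ → Euc n) (ys : ℕ → Euc d)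
    (ystar : Euc n → Euc d) (Phit : Euc n → ℝ)
    (hl : 0 < l) (hDy : 0 < Dy) (hry : 0 < ry)
    (hsmooth : LSmooth f gx gy l) (hstand : Standing f X Y Dy)
    (hprojX : IsProjection X projX) (hprojY : IsProjection Y projY)
    (hα : 0 < α) (hα' : α ≤ 1 / (4 * (l + ry)))
    (hc : 0 < c) (hc' : c ≤ ry / (l * (3 * ry + 2 * l)))
    -- Perturbed GDA iterations
    (hx0 : xs 0 ∈ X) (hy0 : ys 0 ∈ Y)
    (hxrec : ∀ t, xs (t + 1) = projX (xs t - c • gx (xs t) (ys t)))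
    (hyrec : ∀ t, ys (t + 1) = projY (ys t + α • (gy (xs (t + 1)) (ys t) - ry • ys t)))
    -- ỹ*(x): maximizer of f̃(x,·) over Y
    (hystar : ∀ x ∈ X, ystar x ∈ Y ∧
      ∀ y ∈ Y, f x y - ry / 2 * ‖y‖ ^ 2 ≤ f x (ystar x) - ry / 2 * ‖ystar x‖ ^ 2)
    -- Φ̃(x) = max_{y ∈ Y} f̃(x,y)
    (hPhit : ∀ x, Phit x = sSup ((fun y => f x y - ry / 2 * ‖y‖ ^ 2) '' Y))
    -- Φ̃ is differentiable on X with ∇Φ̃(x) = ∇ₓ f̃(x, ỹ*(x)) = gx x (ỹ*(x))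
    (hgrad : ∀ x ∈ X, HasGradientAt Phit (gx x (ystar x)) x)
    -- ∇Φ̃ is (ℓ + ℓ²/r_y)-Lipschitz on X
    (hlip : ∀ x ∈ X, ∀ x' ∈ X,
      ‖gx x (ystar x) - gx x' (ystar x')‖ ≤ (l + l ^ 2 / ry) * ‖x - x'‖) :
    ∀ t : ℕ,
      (2 * Phit (xs (t + 1)) - (f (xs (t + 1)) (ys (t + 1)) - ry / 2 * ‖ys (t + 1)‖ ^ 2))
        - (2 * Phit (xs t) - (f (xs t) (ys t) - ry / 2 * ‖ys t‖ ^ 2))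
      ≤ 2 * l * ‖ystar (xs t) - ys t‖ * ‖xs (t + 1) - xs t‖
        - 1 / (2 * α) * ‖ys (t + 1) - ys t‖ ^ 2
        - 1 / (2 * c) * ‖xs (t + 1) - xs t‖ ^ 2 :=
  perturbed_gda_basic_descent_general n d f gx gy X Y l Dy ry α c projX projY xs ys ystar Phit hl
    hry hsmooth hstand hprojX hprojY hα hα' hc hc' hx0 hy0 hxrec hyrec hgrad hlip
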